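/- Let n ≥ 2 and m ≥ 3 be integers and let P₂ be the lazy nearest-neighbor measure on (ℤ/mℤ)^n given by P₂(0) = 1/2, P₂(e_i) = P₂(−e_i) = 1/(4n) for each standard generator e_i (1 ≤ i ≤ n), and P₂(g) = 0 otherwise. Then for every real c > 0 and every natural number l with l ≥ (m²/2)·((n+1)·log(m·n) + c·(n+1)) (log denoting natural logarithm), one has 4·‖P₂^{*l} − U‖²_TV ≤ (1 + 1/nⁿ)·e^{−c}. -/

import Mathlib

open Finset

/-- Convolution of two real-valued measures on a finite additive group. -/
noncomputable def convolve {G : Type*} [Fintype G] [AddGroup G] (μ ν : G → ℝ) : G → ℝ :=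
  fun g => ∑ h : G, μ h * ν (g - h)

/-- `l`-fold self-convolution of a measure (the `l = 0` case is the point mass at `0`). -/
noncomputable def convPow {G : Type*} [Fintype G] [AddGroup G] [DecidableEq G]
    (μ : G → ℝ) : ℕ → G → ℝ
  | 0 => fun g => if g = 0 then 1 else 0
  | l + 1 => convolve μ (convPow μ l)

/-- Total variation distance between two measures on a finite set. -/
noncomputable def tvDist {G : Type*} [Fintype G] (μ ν : G → ℝ) : ℝ :=
  (∑ g : G, |μ g - ν g|) / 2

/-- The uniform distribution on a finite set. -/
noncomputable def unif (G : Type*) [Fintype G] : G → ℝ :=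
  fun _ => 1 / (Fintype.card G)

/-- The lazy nearest-neighbor walk on `(ℤ/mℤ)^n`:
`P₂ 0 = 1/2`, `P₂(± e_i) = 1/(4n)`, and `P₂ = 0` elsewhere. -/
noncomputable def lazyNN (n m : ℕ) : (Fin n → ZMod m) → ℝ := fun g =>
  if g = 0 then 1 / 2
  else if ∃ i : Fin n, g = Pi.single i 1 ∨ g = -Pi.single i 1 then 1 / (4 * n)
  else 0

/-!
Upper bound lemma: by Cauchy–Schwarz and Plancherel on a finite abelian group,
`4 ‖μ^{*l} - U‖²_TV ≤ ∑_{ψ ≠ 1} |μ̂ ψ|^{2l}`. The characters of `(ℤ/mℤ)ⁿ` are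
`g ↦ ∏ᵢ e^{2πi xᵢ gᵢ / m}`, on which `P₂` takes the real value
`λ x = 1/2 + (1/2n) ∑ᵢ cos (2π xᵢ / m)`; laziness makes `λ x ≥ 0`. From `λ ≤ e^{λ-1}` and
`cos (2π k / m) ≤ 1 - 8/m²` for `k ≢ 0` we get `λ x ^ {2l} ≤ ∏_{xᵢ ≠ 0} e^{-8l/(nm²)}`, so the sum
is at most `(1 + (m-1) e^{-8l/(nm²)})ⁿ - 1`, which is `≤ e^{-c}` for `l` beyond the stated bound.
-/

namespace RandomWalk

section Fourier

variable {G : Type*} [AddCommGroup G] [Fintype G]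

noncomputable def fourierTransform (μ : G → ℝ) (ψ : AddChar G ℂ) : ℂ :=
  ∑ g, (μ g : ℂ) * ψ g

lemma fourierTransform_sub (μ ν : G → ℝ) (ψ : AddChar G ℂ) :
    fourierTransform (fun g => μ g - ν g) ψ
      = fourierTransform μ ψ - fourierTransform ν ψ := by
  simp only [fourierTransform, Complex.ofReal_sub, sub_mul, Finset.sum_sub_distrib]

lemma fourierTransform_zero (μ : G → ℝ) : fourierTransform μ 0 = ∑ g, μ g := by
  simp [fourierTransform]

lemma fourierTransform_convolve (μ ν : G → ℝ) (ψ : AddChar G ℂ) :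
    fourierTransform (convolve μ ν) ψ = fourierTransform μ ψ * fourierTransform ν ψ := by
  have shift (h : G) : ∑ g, (ν (g - h) : ℂ) * ψ (g - h) = fourierTransform ν ψ :=
    (Equiv.subRight h).sum_comp fun g => (ν g : ℂ) * ψ g
  calc fourierTransform (convolve μ ν) ψ
      = ∑ h, (μ h : ℂ) * ψ h * ∑ g, (ν (g - h) : ℂ) * ψ (g - h) := by
        simp only [fourierTransform, convolve, Complex.ofReal_sum, Complex.ofReal_mul,
          Finset.sum_mul, Finset.mul_sum]
        rw [Finset.sum_comm]
        refine Finset.sum_congr rfl fun h _ => Finset.sum_congr rfl fun g _ => ?_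
        rw [show ψ g = ψ h * ψ (g - h) by rw [← AddChar.map_add_eq_mul, add_sub_cancel]]
        ring
    _ = fourierTransform μ ψ * fourierTransform ν ψ := by
        simp only [shift, fourierTransform, Finset.sum_mul]

lemma fourierTransform_convPow [DecidableEq G] (μ : G → ℝ) (ψ : AddChar G ℂ) (l : ℕ) :
    fourierTransform (convPow μ l) ψ = fourierTransform μ ψ ^ l := by
  induction l with
  | zero => simp [fourierTransform, convPow, apply_ite, ite_mul]
  | succ l ih => rw [convPow, fourierTransform_convolve, ih, pow_succ, mul_comm]

lemma fourierTransform_unif (ψ : AddChar G ℂ) [Decidable (ψ = 0)] :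
    fourierTransform (unif G) ψ = if ψ = 0 then 1 else 0 := by
  have hG : (Fintype.card G : ℂ) ≠ 0 := Nat.cast_ne_zero.mpr Fintype.card_ne_zero
  simp only [fourierTransform, unif, ← Finset.mul_sum, AddChar.sum_eq_ite]
  split_ifs <;> simp [hG]

lemma sum_sq_norm_fourierTransform (f : G → ℝ) :
    ∑ ψ : AddChar G ℂ, ‖fourierTransform f ψ‖ ^ 2 = Fintype.card G * ∑ g, f g ^ 2 := by
  classical
  have expand (ψ : AddChar G ℂ) : ((‖fourierTransform f ψ‖ ^ 2 : ℝ) : ℂ)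
      = ∑ g, ∑ h, (f g : ℂ) * f h * ψ (g - h) := by
    rw [Complex.ofReal_pow, ← Complex.mul_conj', fourierTransform, map_sum, Finset.sum_mul_sum]
    refine Finset.sum_congr rfl fun g _ => Finset.sum_congr rfl fun h _ => ?_
    rw [map_mul, Complex.conj_ofReal, ← AddChar.map_neg_eq_conj, sub_eq_add_neg,
      AddChar.map_add_eq_mul]
    ring
  have key : ((∑ ψ : AddChar G ℂ, ‖fourierTransform f ψ‖ ^ 2 : ℝ) : ℂ)
      = Fintype.card G * ∑ g, (f g : ℂ) ^ 2 := by
    simp only [Complex.ofReal_sum, expand]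
    rw [Finset.sum_comm]
    simp only [Finset.mul_sum]
    refine Finset.sum_congr rfl fun g _ => ?_
    rw [Finset.sum_comm]
    simp only [← Finset.mul_sum, AddChar.sum_apply_eq_ite, sub_eq_zero, mul_ite, mul_zero,
      Finset.sum_ite_eq, Finset.mem_univ, if_true]
    ring
  exact_mod_cast key

end Fourier

lemma four_mul_tvDist_sq_le_card_mul_sum_sq {G : Type*} [Fintype G] (μ ν : G → ℝ) :
    4 * tvDist μ ν ^ 2 ≤ Fintype.card G * ∑ g, (μ g - ν g) ^ 2 := by
  have h := sq_sum_le_card_mul_sum_sq (s := Finset.univ) (f := fun g => |μ g - ν g|)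
  simp only [sq_abs, Finset.card_univ] at h
  rw [tvDist]
  linarith

theorem four_mul_tvDist_convPow_unif_sq_le {G : Type*} [AddCommGroup G] [Fintype G]
    [DecidableEq G] (μ : G → ℝ) (hμ : ∑ g, μ g = 1) (l : ℕ) :
    4 * tvDist (convPow μ l) (unif G) ^ 2
      ≤ ∑ ψ : AddChar G ℂ, ‖fourierTransform μ ψ‖ ^ (2 * l) - 1 := by
  classical
  have term (ψ : AddChar G ℂ) :
      ‖fourierTransform (fun g => convPow μ l g - unif G g) ψ‖ ^ 2
        = ‖fourierTransform μ ψ‖ ^ (2 * l) - if ψ = 0 then 1 else 0 := by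
    rw [fourierTransform_sub, fourierTransform_convPow, fourierTransform_unif]
    split_ifs with hψ
    · simp [hψ, fourierTransform_zero, hμ]
    · rw [sub_zero, sub_zero, norm_pow, ← pow_mul, mul_comm]
  calc 4 * tvDist (convPow μ l) (unif G) ^ 2
      ≤ Fintype.card G * ∑ g, (convPow μ l g - unif G g) ^ 2 :=
        four_mul_tvDist_sq_le_card_mul_sum_sq _ _
    _ = ∑ ψ : AddChar G ℂ,
          (‖fourierTransform μ ψ‖ ^ (2 * l) - if ψ = 0 then 1 else 0) := by
        rw [← sum_sq_norm_fourierTransform]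
        exact Finset.sum_congr rfl fun ψ _ => term ψ
    _ = ∑ ψ : AddChar G ℂ, ‖fourierTransform μ ψ‖ ^ (2 * l) - 1 := by
        rw [Finset.sum_sub_distrib, Finset.sum_ite_eq']
        simp

section PiChar

variable {ι : Type*} [Fintype ι] {m : ℕ} [NeZero m]

noncomputable def piChar (x : ι → ZMod m) : AddChar (ι → ZMod m) ℂ :=
  ZMod.stdAddChar.compAddMonoidHom (AddMonoidHom.mk' (x ⬝ᵥ ·) (dotProduct_add x))

lemma piChar_apply (x g : ι → ZMod m) : piChar x g = ZMod.stdAddChar (x ⬝ᵥ g) := rfl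

variable [DecidableEq ι]

lemma piChar_single (x : ι → ZMod m) (i : ι) :
    piChar x (Pi.single i 1) = ZMod.stdAddChar (x i) := by
  rw [piChar_apply, dotProduct_single_one]

lemma piChar_injective :
    Function.Injective (piChar : (ι → ZMod m) → AddChar (ι → ZMod m) ℂ) := by
  intro x y h
  funext i
  apply ZMod.injective_stdAddChar
  rw [← piChar_single, ← piChar_single, h]

lemma piChar_bijective :
    Function.Bijective (piChar : (ι → ZMod m) → AddChar (ι → ZMod m) ℂ) :=
  (Fintype.bijective_iff_injective_and_card _).mpr ⟨piChar_injective, AddChar.card_eq.symm⟩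

end PiChar

lemma re_stdAddChar_mem_Icc {m : ℕ} [NeZero m] (s : ZMod m) :
    (ZMod.stdAddChar s).re ∈ Set.Icc (-1) 1 :=
  abs_le.mp ((Complex.abs_re_le_norm _).trans_eq (AddChar.norm_apply _ _))

/- Apply `cos θ ≤ 1 - 2θ²/π²` to `θ = 2πj/m`, where `j` is the representative of `s` with
`|j| ≤ m/2`. -/
open Real in
lemma re_stdAddChar_le {m : ℕ} [NeZero m] {s : ZMod m} (hs : s ≠ 0) :
    (ZMod.stdAddChar s).re ≤ 1 - 8 / (m : ℝ) ^ 2 := by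
  set j := s.valMinAbs
  have hm : (0 : ℝ) < m := Nat.cast_pos.mpr (NeZero.pos m)
  have hj : (1 : ℝ) ≤ (j : ℝ) ^ 2 := by
    have : j ≠ 0 := (ZMod.valMinAbs_eq_zero s).not.mpr hs
    have : 1 ≤ j ^ 2 := by nlinarith [Int.one_le_abs this, sq_abs j]
    exact_mod_cast this
  have hθ : |2 * π * j / m| ≤ π := by
    have hjm := s.valMinAbs_mem_Ioc
    have hjm' : |(j : ℝ)| * 2 ≤ m := by
      have h : |(j : ℝ) * 2| ≤ m :=
        abs_le.mpr ⟨by exact_mod_cast hjm.1.le, by exact_mod_cast hjm.2⟩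
      rwa [abs_mul, abs_two] at h
    rw [abs_div, abs_of_pos hm, div_le_iff₀ hm, abs_mul, abs_of_pos (by positivity : 0 < 2 * π)]
    nlinarith [mul_le_mul_of_nonneg_left hjm' pi_pos.le]
  have hre : (ZMod.stdAddChar s).re = Real.cos (2 * π * j / m) := by
    rw [ZMod.stdAddChar_apply, ← ZMod.coe_valMinAbs s, ZMod.toCircle_intCast,
      show 2 * π * Complex.I * j / m = ((2 * π * j / m : ℝ) : ℂ) * Complex.I by
        push_cast; ring,
      Complex.exp_ofReal_mul_I_re]
  calc (ZMod.stdAddChar s).re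
      ≤ 1 - 2 / π ^ 2 * (2 * π * j / m) ^ 2 := hre ▸ cos_le_one_sub_mul_cos_sq hθ
    _ = 1 - 8 * j ^ 2 / m ^ 2 := by field_simp; ring
    _ ≤ 1 - 8 / (m : ℝ) ^ 2 := by gcongr; linarith

lemma sum_pi_prod_ite_eq {ι α R : Type*} [Fintype ι] [DecidableEq ι] [Fintype α]
    [DecidableEq α] [CommRing R] (a₀ : α) (a : R) :
    ∑ x : ι → α, ∏ i, (if x i = a₀ then 1 else a)
      = (1 + (Fintype.card α - 1) * a) ^ Fintype.card ι := by
  rw [← Fintype.prod_sum (fun (_ : ι) (s : α) => if s = a₀ then (1 : R) else a),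
    Finset.prod_const, Finset.card_univ]
  congr 1
  rw [← Finset.add_sum_erase _ _ (Finset.mem_univ a₀), if_pos rfl,
    Finset.sum_congr rfl fun s hs => if_neg (Finset.ne_of_mem_erase hs), Finset.sum_const,
    Finset.card_erase_of_mem (Finset.mem_univ a₀), Finset.card_univ, nsmul_eq_mul,
    Nat.cast_pred (Fintype.card_pos_iff.mpr ⟨a₀⟩)]

lemma one_ne_zero_of_two_ne_zero {R : Type*} [AddMonoidWithOne R] (h2 : (2 : R) ≠ 0) :
    (1 : R) ≠ 0 :=
  fun h => h2 (by rw [← one_add_one_eq_two, h, add_zero])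

section SignedBasis

variable {ι : Type*} [DecidableEq ι] {m : ℕ}

def signedBasis : ι ⊕ ι → (ι → ZMod m) :=
  Sum.elim (fun i => Pi.single i 1) (fun i => -Pi.single i 1)

variable (h2 : (2 : ZMod m) ≠ 0)
include h2

lemma signedBasis_injective : Function.Injective (signedBasis : ι ⊕ ι → (ι → ZMod m)) := by
  have h1 := one_ne_zero_of_two_ne_zero h2
  have single_inj : Function.Injective (fun i : ι => (Pi.single i 1 : ι → ZMod m)) :=
    fun i j h => by_contra fun hij => by simpa [Pi.single_eq_of_ne hij, h1] using congrFun h i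
  refine Sum.elim_injective.mpr ⟨single_inj, neg_injective.comp single_inj, fun i j h => ?_⟩
  have hi := congrFun h i
  by_cases hij : i = j
  · subst hij
    simp only [Pi.neg_apply, Pi.single_eq_same] at hi
    exact h2 (by rw [← one_add_one_eq_two]; nth_rw 1 [hi]; rw [neg_add_cancel])
  · simp [Pi.single_eq_of_ne hij, h1] at hi

lemma signedBasis_ne_zero (j : ι ⊕ ι) : signedBasis j ≠ (0 : ι → ZMod m) := by
  have h1 := one_ne_zero_of_two_ne_zero h2
  rcases j with i | i <;> simp [signedBasis, h1]

end SignedBasis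

section LazyWalk

variable {n m : ℕ} [NeZero m]

lemma sum_lazyNN_mul (h2 : (2 : ZMod m) ≠ 0) (w : (Fin n → ZMod m) → ℂ) :
    ∑ g, (lazyNN n m g : ℂ) * w g = w 0 / 2 + (∑ j, w (signedBasis j)) / (4 * n) := by
  set S : Finset (Fin n → ZMod m) := Finset.univ.map ⟨signedBasis, signedBasis_injective h2⟩
  have mem_S (g : Fin n → ZMod m) :
      g ∈ S ↔ ∃ i : Fin n, g = Pi.single i 1 ∨ g = -Pi.single i 1 := by
    simp [S, signedBasis, eq_comm, exists_or]
  have zero_notMem : (0 : Fin n → ZMod m) ∉ S := by simp [S, signedBasis_ne_zero h2]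
  have pointwise (g : Fin n → ZMod m) : (lazyNN n m g : ℂ) * w g
      = (if g = 0 then w 0 / 2 else 0) + (if g ∈ S then w g / (4 * n) else 0) := by
    by_cases hg : g = 0
    · subst hg
      simp [lazyNN, zero_notMem, div_eq_inv_mul]
    · simp only [lazyNN, if_neg hg, ← mem_S]
      split_ifs <;> push_cast <;> ring
  simp only [pointwise, Finset.sum_add_distrib, Finset.sum_ite_eq', Finset.mem_univ, if_true,
    Finset.sum_ite_mem, Finset.univ_inter, ← Finset.sum_div]
  simp [S]

lemma sum_lazyNN (h2 : (2 : ZMod m) ≠ 0) (hn : n ≠ 0) : ∑ g, lazyNN n m g = 1 := by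
  have h := sum_lazyNN_mul (n := n) h2 1
  simp only [Pi.one_apply, mul_one, Finset.sum_const, Finset.card_univ, Fintype.card_sum,
    Fintype.card_fin, nsmul_eq_mul] at h
  have hn' : (n : ℂ) ≠ 0 := Nat.cast_ne_zero.mpr hn
  have h' : ((∑ g, lazyNN n m g : ℝ) : ℂ) = 1 := by
    push_cast
    rw [h]
    push_cast
    field_simp
    ring
  exact_mod_cast h'

noncomputable def lazyEigenvalue (x : Fin n → ZMod m) : ℝ :=
  1 / 2 + (∑ i, (ZMod.stdAddChar (x i)).re) / (2 * n)

lemma fourierTransform_lazyNN_piChar (h2 : (2 : ZMod m) ≠ 0) (x : Fin n → ZMod m) :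
    fourierTransform (lazyNN n m) (piChar x) = lazyEigenvalue x := by
  rw [fourierTransform, sum_lazyNN_mul h2, Fintype.sum_sum_type]
  simp only [signedBasis, Sum.elim_inl, Sum.elim_inr, AddChar.map_zero_eq_one,
    AddChar.map_neg_eq_conj, piChar_single, ← Finset.sum_add_distrib, Complex.add_conj,
    lazyEigenvalue]
  push_cast
  rw [← Finset.mul_sum]
  ring

lemma lazyEigenvalue_nonneg (x : Fin n → ZMod m) : 0 ≤ lazyEigenvalue x := by
  rcases eq_or_ne n 0 with rfl | hn
  · simp [lazyEigenvalue]
  have hsum : -(n : ℝ) ≤ ∑ i, (ZMod.stdAddChar (x i)).re := by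
    simpa using Finset.sum_le_sum (s := Finset.univ) fun i _ => (re_stdAddChar_mem_Icc (x i)).1
  have hn' : (0 : ℝ) < n := Nat.cast_pos.mpr (Nat.pos_of_ne_zero hn)
  have h : -(1 / 2 : ℝ) ≤ (∑ i, (ZMod.stdAddChar (x i)).re) / (2 * n) := by
    rw [le_div_iff₀ (by positivity)]
    linarith
  rw [lazyEigenvalue]
  linarith

open Real in
lemma lazyEigenvalue_pow_le (hn : n ≠ 0) (l : ℕ) (x : Fin n → ZMod m) :
    lazyEigenvalue x ^ (2 * l)
      ≤ ∏ i, if x i = 0 then 1 else exp (-(8 * l / (n * (m : ℝ) ^ 2))) := by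
  have hn' : (0 : ℝ) < n := Nat.cast_pos.mpr (Nat.pos_of_ne_zero hn)
  have hexponent : 2 * l * (lazyEigenvalue x - 1)
      ≤ ∑ i, if x i = 0 then 0 else -(8 * l / (n * (m : ℝ) ^ 2)) := by
    have h : 2 * l * (lazyEigenvalue x - 1)
        = ∑ i, l / n * ((ZMod.stdAddChar (x i)).re - 1) := by
      rw [lazyEigenvalue, ← Finset.mul_sum, Finset.sum_sub_distrib]
      simp only [Finset.sum_const, Finset.card_univ, Fintype.card_fin, nsmul_eq_mul, mul_one]
      field_simp
      ring
    rw [h]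
    gcongr with i
    split_ifs with hx
    · exact mul_nonpos_of_nonneg_of_nonpos (by positivity)
        (sub_nonpos.mpr (re_stdAddChar_mem_Icc (x i)).2)
    · calc (l : ℝ) / n * ((ZMod.stdAddChar (x i)).re - 1)
            ≤ l / n * (-(8 / (m : ℝ) ^ 2)) := by
            gcongr
            linarith [re_stdAddChar_le hx]
        _ = -(8 * l / (n * (m : ℝ) ^ 2)) := by field_simp
  calc lazyEigenvalue x ^ (2 * l)
      ≤ exp (lazyEigenvalue x - 1) ^ (2 * l) :=
        pow_le_pow_left₀ (lazyEigenvalue_nonneg x)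
          (by linarith [add_one_le_exp (lazyEigenvalue x - 1)]) _
    _ = exp (2 * l * (lazyEigenvalue x - 1)) := by rw [← exp_nat_mul]; push_cast; ring_nf
    _ ≤ exp (∑ i, if x i = 0 then 0 else -(8 * l / (n * (m : ℝ) ^ 2))) :=
        exp_le_exp.mpr hexponent
    _ = ∏ i, if x i = 0 then 1 else exp (-(8 * l / (n * (m : ℝ) ^ 2))) := by
        rw [exp_sum]
        exact Finset.prod_congr rfl fun i _ => by split_ifs <;> simp

theorem four_mul_tvDist_convPow_lazyNN_sq_le (h2 : (2 : ZMod m) ≠ 0) (hn : n ≠ 0) (l : ℕ) :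
    4 * tvDist (convPow (lazyNN n m) l) (unif (Fin n → ZMod m)) ^ 2
      ≤ (1 + (m - 1) * Real.exp (-(8 * l / (n * (m : ℝ) ^ 2)))) ^ n - 1 := by
  refine (four_mul_tvDist_convPow_unif_sq_le _ (sum_lazyNN h2 hn) l).trans ?_
  rw [← piChar_bijective.sum_comp]
  gcongr
  calc ∑ x, ‖fourierTransform (lazyNN n m) (piChar x)‖ ^ (2 * l)
      = ∑ x, lazyEigenvalue x ^ (2 * l) := by
        simp only [fourierTransform_lazyNN_piChar h2, Complex.norm_real, Real.norm_eq_abs,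
          pow_mul, sq_abs]
    _ ≤ ∑ x, ∏ i, if x i = 0 then 1 else Real.exp (-(8 * l / (n * (m : ℝ) ^ 2))) :=
        Finset.sum_le_sum fun x _ => lazyEigenvalue_pow_le hn l x
    _ = (1 + (m - 1) * Real.exp (-(8 * l / (n * (m : ℝ) ^ 2)))) ^ n := by
        rw [sum_pi_prod_ite_eq, ZMod.card, Fintype.card_fin]

end LazyWalk

section Arithmetic

open Real

lemma one_add_pow_sub_one_le {b : ℝ} (hb : 0 ≤ b) {n : ℕ} (h : n * b ≤ 1 / 2) :
    (1 + b) ^ n - 1 ≤ 2 * (n * b) := by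
  have hexp : (1 + b) ^ n ≤ Real.exp (n * b) := by
    rw [Real.exp_nat_mul]
    exact pow_le_pow_left₀ (by linarith) (by linarith [Real.add_one_le_exp b]) n
  have hnb : 0 ≤ n * b := by positivity
  have hdiv : 1 / (1 - n * b) ≤ 1 + 2 * (n * b) := by
    rw [div_le_iff₀ (by linarith)]
    nlinarith
  linarith [Real.exp_bound_div_one_sub_of_interval hnb (by linarith)]


noncomputable def mixingTimeBound (n m : ℕ) (c : ℝ) : ℝ :=
  ((m : ℝ) ^ 2 / 2) * (((n : ℝ) + 1) * log (m * n) + c * ((n : ℝ) + 1))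

variable {n m l : ℕ} {c : ℝ}

lemma exp_neg_le_of_mixingTimeBound_le (hn : 1 ≤ n) (hm : 1 ≤ m) (hc : 0 ≤ c)
    (hl : mixingTimeBound n m c ≤ l) :
    exp (-(8 * l / (n * (m : ℝ) ^ 2))) ≤ exp (-(4 * c)) / (m * n) ^ 4 := by
  have hn' : (1 : ℝ) ≤ n := Nat.one_le_cast.mpr hn
  have hm' : (1 : ℝ) ≤ m := Nat.one_le_cast.mpr hm
  have hmn : 0 < (m : ℝ) * n := by positivity
  have hL : 0 ≤ log (m * n) + c :=
    add_nonneg (log_nonneg (one_le_mul_of_one_le_of_one_le hm' hn')) hc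
  have hexponent : 4 * (log (m * n) + c) ≤ 8 * l / (n * (m : ℝ) ^ 2) := by
    rw [le_div_iff₀ (by positivity)]
    rw [mixingTimeBound] at hl
    nlinarith [mul_nonneg hL (sq_nonneg (m : ℝ))]
  calc exp (-(8 * l / (n * (m : ℝ) ^ 2))) ≤ exp (-(4 * c) - 4 * log (m * n)) :=
        exp_le_exp.mpr (by linarith)
    _ = exp (-(4 * c)) / (m * n) ^ 4 := by
        rw [exp_sub, show 4 * log (m * n) = log (((m : ℝ) * n) ^ 4) by rw [log_pow]; norm_num,
          exp_log (by positivity)]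

lemma one_add_mul_exp_pow_sub_one_le (hn : 1 ≤ n) (hm : 2 ≤ m) (hc : 0 ≤ c)
    (hl : mixingTimeBound n m c ≤ l) :
    (1 + (m - 1) * exp (-(8 * l / (n * (m : ℝ) ^ 2)))) ^ n - 1 ≤ exp (-c) := by
  set a := exp (-(8 * l / (n * (m : ℝ) ^ 2)))
  have ha : a ≤ exp (-(4 * c)) / (m * n) ^ 4 :=
    exp_neg_le_of_mixingTimeBound_le hn (by omega) hc hl
  have ha₀ : 0 ≤ a := (exp_pos _).le
  have hm' : (2 : ℝ) ≤ m := by exact_mod_cast hm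
  have hn' : (1 : ℝ) ≤ n := Nat.one_le_cast.mpr hn
  have hmn : 2 ≤ (m : ℝ) * n := by nlinarith
  have hdecay : exp (-(4 * c)) ≤ exp (-c) := exp_le_exp.mpr (by linarith)
  have hnb : n * ((m - 1) * a) ≤ exp (-c) / 8 :=
    calc n * ((m - 1) * a) ≤ (m * n) * a := by nlinarith
      _ ≤ (m * n) * (exp (-(4 * c)) / (m * n) ^ 4) := by gcongr
      _ = exp (-(4 * c)) / (m * n) ^ 3 := by field_simp
      _ ≤ exp (-c) / 8 := by
          gcongr
          nlinarith [pow_le_pow_left₀ (by norm_num) hmn 3]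
  have hexp : exp (-c) ≤ 1 := exp_le_one_iff.mpr (by linarith)
  have := one_add_pow_sub_one_le (b := (m - 1) * a) (mul_nonneg (by linarith) ha₀) (n := n)
    (by linarith)
  linarith [exp_pos (-c)]

end Arithmetic

end RandomWalk

/-- Comparison-theory upper bound for the lazy nearest-neighbor walk on `(ℤ/mℤ)^n`. -/
theorem stmt_19 (n m : ℕ) [NeZero m] (hn : 2 ≤ n) (hm : 3 ≤ m)
    (c : ℝ) (hc : 0 < c) (l : ℕ)
    (hl : ((m : ℝ) ^ 2 / 2) * (((n : ℝ) + 1) * Real.log (m * n) + c * ((n : ℝ) + 1)) ≤ (l : ℝ)) :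
    4 * (tvDist (convPow (lazyNN n m) l) (unif (Fin n → ZMod m))) ^ 2
      ≤ (1 + 1 / (n : ℝ) ^ n) * Real.exp (-c) := by
  have h2 : (2 : ZMod m) ≠ 0 := by
    rw [← Nat.cast_ofNat, Ne, ZMod.natCast_eq_zero_iff]
    exact fun h => absurd (Nat.le_of_dvd two_pos h) (by omega)
  calc 4 * (tvDist (convPow (lazyNN n m) l) (unif (Fin n → ZMod m))) ^ 2
      ≤ (1 + (m - 1) * Real.exp (-(8 * l / (n * (m : ℝ) ^ 2)))) ^ n - 1 :=
        RandomWalk.four_mul_tvDist_convPow_lazyNN_sq_le h2 (by omega) l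
    _ ≤ Real.exp (-c) := RandomWalk.one_add_mul_exp_pow_sub_one_le (by omega) (by omega) hc.le hl
    _ ≤ (1 + 1 / (n : ℝ) ^ n) * Real.exp (-c) :=
        le_mul_of_one_le_left (Real.exp_pos _).le (le_add_of_nonneg_right (by positivity))
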